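/- For the function W one has W(Q) = {w ∈ ℂ : −π/2 < Im w < 0}, where Q = {z ∈ ℂ : Re z > 0 and Im z > 0} is the open first quadrant, and W((√(2+γ₀), ∞)) = (0, √3·π/9), where γ₀ = 2/(e^{2√3π/9} − 1). -/

import Mathlib

/-!
Off the real axis `W = ½·Log ∘ m ∘ (z ↦ z²)` with the Möbius map `m ζ = 1 + 2/(ζ - 2)`.
Squaring maps the open first quadrant onto the upper half-plane, `m` maps that onto the lower
half-plane (`Im (m ζ) = -2 Im ζ / |ζ - 2|²`, inverse `u ↦ 2u/(u - 1)`), and `½·Log` maps the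
lower half-plane onto the strip `-π/2 < Im w < 0` (inverse `w ↦ exp (2w)`). On the ray
`(√(2 + γ₀), ∞)`, where `W` is real, the same three maps pass through `(2 + γ₀, ∞)` and
`(1, 1 + 2/γ₀) = (1, e^{2√3π/9})` to `(0, √3π/9)`.
-/

/-- The function `W` from the paper, extended arbitrarily off its natural domain. -/
noncomputable def Wfun (z : ℂ) : ℂ :=
  if z.im = 0 ∧ 0 < z.re ∧ z.re < Real.sqrt 2 then
    ((Real.log ‖1 + 2 / (z ^ 2 - 2)‖ / 2 : ℝ) : ℂ)
      - Complex.I * (Real.pi : ℂ) / 2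
  else Complex.log (1 + 2 / (z ^ 2 - 2)) / 2

/-- `γ₀ = 2/(e^{2√3π/9} − 1)`. -/
noncomputable def γ0 : ℝ := 2 / (Real.exp (2 * Real.sqrt 3 * Real.pi / 9) - 1)

open Complex Set
open scoped Real

lemma image_sq_firstQuadrant :
    (fun z : ℂ => z ^ 2) '' {z | 0 < z.re ∧ 0 < z.im} = {ζ | 0 < ζ.im} := by
  ext ζ
  constructor
  · rintro ⟨z, ⟨hre, him⟩, rfl⟩
    simp only [mem_ofPred_eq, sq, mul_im]
    positivity
  · intro (hζ : 0 < ζ.im)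
    have hζ0 : ζ ≠ 0 := fun h => by simp [h] at hζ
    obtain ⟨harg0, hargπ⟩ : 0 < arg ζ ∧ arg ζ < π :=
      ⟨(arg_nonneg_iff.mpr hζ.le).lt_of_ne fun h => by
          linarith [(arg_eq_zero_iff.mp h.symm).2],
        arg_lt_pi_iff.mpr (Or.inr hζ.ne')⟩
    have him : (log ζ / 2).im = arg ζ / 2 := by simp [log_im]
    refine ⟨exp (log ζ / 2), ⟨?_, ?_⟩, ?_⟩
    · rw [exp_re, him]
      have : 0 < Real.cos (arg ζ / 2) :=
        Real.cos_pos_of_mem_Ioo ⟨by linarith [harg0, Real.pi_pos], by linarith [hargπ]⟩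
      positivity
    · rw [exp_im, him]
      have : 0 < Real.sin (arg ζ / 2) :=
        Real.sin_pos_of_pos_of_lt_pi (by linarith [harg0]) (by linarith [hargπ])
      positivity
    · show exp (log ζ / 2) ^ 2 = ζ
      rw [← exp_nat_mul, Nat.cast_ofNat, mul_div_cancel₀ _ two_ne_zero, exp_log hζ0]

lemma im_one_add_div_sub (a : ℝ) (ζ : ℂ) :
    (1 + a / (ζ - a)).im = -(a * ζ.im) / normSq (ζ - a) := by
  simp only [add_im, one_im, div_im, ofReal_im, sub_re, ofReal_re, zero_mul, zero_div, sub_im,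
    sub_zero, zero_sub, zero_add]
  ring

lemma image_one_add_div_sub_upperHalfPlane {a : ℝ} (ha : 0 < a) :
    (fun ζ : ℂ => 1 + a / (ζ - a)) '' {ζ | 0 < ζ.im} = {u | u.im < 0} := by
  ext u
  constructor
  · rintro ⟨ζ, hζ : 0 < ζ.im, rfl⟩
    have hne : ζ - a ≠ 0 := fun h => by simpa [sub_eq_zero.mp h] using hζ.ne'
    rw [mem_ofPred_eq, im_one_add_div_sub]
    exact div_neg_of_neg_of_pos (by nlinarith) (normSq_pos.mpr hne)
  · intro (hu : u.im < 0)
    have hu1 : u - 1 ≠ 0 := fun h => by simp [sub_eq_zero.mp h] at hu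
    refine ⟨a * u / (u - 1), ?_, ?_⟩
    · show 0 < (a * u / (u - 1)).im
      have : (a * u / (u - 1)).im = -(a * u.im) / normSq (u - 1) := by
        simp only [div_im, mul_im, ofReal_re, ofReal_im, zero_mul, add_zero, sub_re, one_re, mul_re,
          sub_zero, sub_im, one_im]
        ring
      rw [this]
      exact div_pos (by nlinarith) (normSq_pos.mpr hu1)
    · have ha0 : (a : ℂ) ≠ 0 := by exact_mod_cast ha.ne'
      beta_reduce
      field_simp
      ring

lemma image_log_div_two_lowerHalfPlane :
    (fun u : ℂ => log u / 2) '' {u | u.im < 0} = {w | -(π / 2) < w.im ∧ w.im < 0} := by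
  ext w
  constructor
  · rintro ⟨u, hu : u.im < 0, rfl⟩
    have : (log u / 2).im = arg u / 2 := by simp [log_im]
    rw [mem_ofPred_eq, this]
    constructor <;> linarith [neg_pi_lt_arg u, arg_neg_iff.mpr hu]
  · rintro ⟨hlo, hhi⟩
    refine ⟨exp (2 * w), ?_, ?_⟩
    · show (exp (2 * w)).im < 0
      have : Real.sin (2 * w.im) < 0 :=
        Real.sin_neg_of_neg_of_neg_pi_lt (by linarith) (by linarith)
      rw [exp_im]
      simp only [mul_im, re_ofNat, im_ofNat, zero_mul, add_zero, mul_re, sub_zero]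
      exact mul_neg_of_pos_of_neg (Real.exp_pos _) this
    · have : (2 * w).im = 2 * w.im := by simp
      show log (exp (2 * w)) / 2 = w
      rw [log_exp (by linarith) (by linarith [Real.pi_pos])]
      ring

lemma Real.image_sq_Ioi {a : ℝ} (ha : 0 ≤ a) : (fun x : ℝ => x ^ 2) '' Ioi a = Ioi (a ^ 2) := by
  ext y
  constructor
  · rintro ⟨x, hx : a < x, rfl⟩
    exact pow_lt_pow_left₀ hx ha two_ne_zero
  · intro (hy : a ^ 2 < y)
    refine ⟨√y, ?_, Real.sq_sqrt (by nlinarith)⟩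
    exact Real.lt_sqrt_of_sq_lt hy

lemma Real.image_one_add_div_sub_Ioi {a b : ℝ} (ha : 0 < a) (hab : a < b) :
    (fun x : ℝ => 1 + a / (x - a)) '' Ioi b = Ioo 1 (1 + a / (b - a)) := by
  ext u
  constructor
  · rintro ⟨x, hx : b < x, rfl⟩
    have hxa : 0 < x - a := by linarith
    exact ⟨lt_add_of_pos_right 1 (div_pos ha hxa),
      add_lt_add_right (div_lt_div_of_pos_left ha (sub_pos.mpr hab) (sub_lt_sub_right hx a)) 1⟩
  · rintro ⟨hu1, hu⟩
    refine ⟨a * u / (u - 1), ?_, ?_⟩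
    · have hu1' : 0 < u - 1 := by linarith
      rw [← sub_lt_iff_lt_add', lt_div_iff₀ (by linarith)] at hu
      rw [mem_Ioi, lt_div_iff₀ hu1']
      linarith
    · field_simp
      ring

lemma Real.image_log_div_two_Ioo {c : ℝ} (hc : 1 ≤ c) :
    (fun u => Real.log u / 2) '' Ioo 1 c = Ioo 0 (Real.log c / 2) := by
  rw [← image_image (· / 2) Real.log, Real.image_log_Ioo one_pos hc, Real.log_one]
  simpa [div_eq_mul_inv] using image_mul_right_Ioo 0 (Real.log c) (inv_pos.mpr two_pos)

lemma Wfun_of_im_ne_zero {z : ℂ} (hz : z.im ≠ 0) : Wfun z = log (1 + 2 / (z ^ 2 - 2)) / 2 :=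
  if_neg fun h => hz h.1

lemma γ0_pos : 0 < γ0 :=
  div_pos two_pos (sub_pos.mpr (Real.one_lt_exp_iff.mpr (by positivity)))

lemma Wfun_ofReal {x : ℝ} (hx : √2 ≤ x) :
    Wfun x = (Real.log (1 + 2 / (x ^ 2 - 2)) / 2 : ℝ) := by
  have hx2 : 0 ≤ x ^ 2 - 2 := by
    nlinarith [Real.sq_sqrt (zero_le_two : (0:ℝ) ≤ 2), Real.sqrt_nonneg 2]
  rw [Wfun, if_neg fun h => (not_lt.mpr hx) (by simpa using h.2.2), ofReal_div,
    ofReal_log (by positivity)]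
  norm_cast

lemma one_add_two_div_γ0 : 1 + 2 / γ0 = Real.exp (2 * √3 * π / 9) := by
  have : 1 < Real.exp (2 * √3 * π / 9) := Real.one_lt_exp_iff.mpr (by positivity)
  rw [γ0, div_div_eq_mul_div, mul_div_cancel_left₀ _ two_ne_zero]
  ring

theorem Wfun_images :
    Wfun '' {z : ℂ | 0 < z.re ∧ 0 < z.im}
      = {w : ℂ | -(Real.pi / 2) < w.im ∧ w.im < 0} ∧
    Wfun '' ((fun x : ℝ => (x : ℂ)) '' Set.Ioi (Real.sqrt (2 + γ0)))
      = (fun x : ℝ => (x : ℂ)) '' Set.Ioo 0 (Real.sqrt 3 * Real.pi / 9) := by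
  constructor
  · calc Wfun '' {z : ℂ | 0 < z.re ∧ 0 < z.im}
        = (fun u => log u / 2) '' ((fun ζ : ℂ => 1 + (2 : ℝ) / (ζ - (2 : ℝ))) ''
            ((fun z : ℂ => z ^ 2) '' {z | 0 < z.re ∧ 0 < z.im})) := by
          simp only [image_image, ofReal_ofNat]
          exact image_congr fun z hz => Wfun_of_im_ne_zero hz.2.ne'
      _ = _ := by
          rw [image_sq_firstQuadrant, image_one_add_div_sub_upperHalfPlane two_pos,
            image_log_div_two_lowerHalfPlane]
  · have hγ0 := γ0_pos
    have hsqrt : √2 ≤ √(2 + γ0) := Real.sqrt_le_sqrt (by linarith)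
    calc Wfun '' ((fun x : ℝ => (x : ℂ)) '' Ioi √(2 + γ0))
        = (fun x : ℝ => (x : ℂ)) '' ((fun u => Real.log u / 2) ''
            ((fun x : ℝ => 1 + 2 / (x - 2)) '' ((fun x : ℝ => x ^ 2) '' Ioi √(2 + γ0)))) := by
          simp only [image_image]
          exact image_congr fun x hx => Wfun_ofReal (hsqrt.trans (le_of_lt hx))
      _ = _ := by
          rw [Real.image_sq_Ioi (Real.sqrt_nonneg _), Real.sq_sqrt (by positivity),
            Real.image_one_add_div_sub_Ioi two_pos (by linarith), add_sub_cancel_left,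
            one_add_two_div_γ0,
            Real.image_log_div_two_Ioo (Real.one_lt_exp_iff.mpr (by positivity)).le, Real.log_exp]
          congr 2
          ring
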